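/- Let X and Y be real Banach spaces, let L : X → Y and R : Y → X be continuous linear maps with L ∘ R = id_Y, let c₀ > 0 satisfy ‖R‖ ≤ c₀, let ε > 0 and k ≥ 0 satisfy 4 k c₀² ε < 1, let Q be a map from the closed ball B̄(0, 2c₀ε) in X to Y with Q(0) = 0 and ‖Q(x) − Q(x')‖ ≤ k ‖x − x'‖ (‖x‖ + ‖x'‖) for all x, x' ∈ B̄(0, 2c₀ε), and let y₀ ∈ Y satisfy ‖y₀‖ ≤ ε. Then there exists v ∈ Y with ‖v‖ ≤ 2ε such that the element x := R v satisfies y₀ + L x + Q(x) = 0; in particular ‖x‖ ≤ 2 c₀ ε. -/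

import Mathlib

open Metric Set Function

/-!
The fixed points of `T v = -y₀ - Q (R v)` are exactly the `v` with `y₀ + L (R v) + Q (R v) = 0`,
because `L (R v) = v`. On the ball `‖v‖ ≤ 2ε` we have `‖R v‖ ≤ 2c₀ε`, so the quadratic bound
`‖Q x‖ ≤ k ‖x‖²` gives `‖T v‖ ≤ ε + 4kc₀²ε · ε ≤ 2ε`, and the difference bound makes `T` Lipschitz
with constant `2k · 2c₀ε · c₀ = 4kc₀²ε < 1`. Banach's fixed-point theorem on the (complete) ball
finishes the proof.
-/

theorem LipschitzOnWith.exists_isFixedPt_of_lt_one {α : Type*} [MetricSpace α] {K : NNReal}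
    {f : α → α} {s : Set α} (hf : LipschitzOnWith K f s) (hK : K < 1) (hsc : IsComplete s)
    (hsf : MapsTo f s s) (hs : s.Nonempty) : ∃ x ∈ s, IsFixedPt f x := by
  obtain ⟨x, hx⟩ := hs
  obtain ⟨y, hys, hy, -⟩ :=
    ContractingWith.exists_fixedPoint' hsc hsf ⟨hK, hf.mapsToRestrict hsf⟩ hx (edist_ne_top _ _)
  exact ⟨y, hys, hy⟩

theorem ContinuousLinearMap.mapsTo_closedBall_zero {E F : Type*} [SeminormedAddCommGroup E]
    [NormedSpace ℝ E] [SeminormedAddCommGroup F] [NormedSpace ℝ F] {R : E →L[ℝ] F} {c : ℝ}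
    (hR : ‖R‖ ≤ c) (ρ : ℝ) : MapsTo R (closedBall 0 ρ) (closedBall 0 (c * ρ)) := by
  intro v hv
  rw [mem_closedBall_zero_iff] at hv ⊢
  calc ‖R v‖ ≤ c * ‖v‖ := R.le_of_opNorm_le hR v
    _ ≤ c * ρ := by gcongr; exact (norm_nonneg R).trans hR

section QuadraticOnBall

variable {E F : Type*} [SeminormedAddCommGroup E] [SeminormedAddCommGroup F] {Q : E → F}
  {k r : ℝ} {x x' : E}

theorem norm_le_mul_sq_of_quadratic (hQ0 : Q 0 = 0)
    (hQ : ∀ x ∈ closedBall (0 : E) r, ∀ x' ∈ closedBall (0 : E) r,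
      ‖Q x - Q x'‖ ≤ k * ‖x - x'‖ * (‖x‖ + ‖x'‖))
    (hx : x ∈ closedBall 0 r) : ‖Q x‖ ≤ k * ‖x‖ ^ 2 := by
  have h0 : (0 : E) ∈ closedBall 0 r := mem_closedBall_self (dist_nonneg.trans hx)
  simpa [hQ0, sq, mul_assoc] using hQ x hx 0 h0

theorem norm_sub_le_of_quadratic (hk : 0 ≤ k)
    (hQ : ∀ x ∈ closedBall (0 : E) r, ∀ x' ∈ closedBall (0 : E) r,
      ‖Q x - Q x'‖ ≤ k * ‖x - x'‖ * (‖x‖ + ‖x'‖))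
    (hx : x ∈ closedBall 0 r) (hx' : x' ∈ closedBall 0 r) :
    ‖Q x - Q x'‖ ≤ 2 * k * r * ‖x - x'‖ := by
  rw [mem_closedBall_zero_iff] at hx hx'
  calc ‖Q x - Q x'‖ ≤ k * ‖x - x'‖ * (‖x‖ + ‖x'‖) := hQ x (by simpa) x' (by simpa)
    _ ≤ k * ‖x - x'‖ * (r + r) := by gcongr
    _ = 2 * k * r * ‖x - x'‖ := by ring

theorem norm_comp_sub_le_of_quadratic [NormedSpace ℝ E] {G : Type*} [SeminormedAddCommGroup G]
    [NormedSpace ℝ G] {R : G →L[ℝ] E} {c : ℝ} {v w : G} (hk : 0 ≤ k)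
    (hQ : ∀ x ∈ closedBall (0 : E) r, ∀ x' ∈ closedBall (0 : E) r,
      ‖Q x - Q x'‖ ≤ k * ‖x - x'‖ * (‖x‖ + ‖x'‖))
    (hR : ‖R‖ ≤ c) (hv : R v ∈ closedBall 0 r) (hw : R w ∈ closedBall 0 r) :
    ‖Q (R v) - Q (R w)‖ ≤ 2 * k * r * c * ‖v - w‖ := by
  have hr : 0 ≤ r := dist_nonneg.trans hv
  calc ‖Q (R v) - Q (R w)‖ ≤ 2 * k * r * ‖R (v - w)‖ := by
        rw [map_sub]; exact norm_sub_le_of_quadratic hk hQ hv hw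
    _ ≤ 2 * k * r * (c * ‖v - w‖) := by gcongr; exact R.le_of_opNorm_le hR _
    _ = 2 * k * r * c * ‖v - w‖ := by ring

end QuadraticOnBall

theorem stmt_7_general
    {X Y : Type*} [NormedAddCommGroup X] [NormedSpace ℝ X]
    [NormedAddCommGroup Y] [NormedSpace ℝ Y] [CompleteSpace Y]
    (L : X →L[ℝ] Y) (R : Y →L[ℝ] X)
    (hLR : L.comp R = ContinuousLinearMap.id ℝ Y)
    (c₀ : ℝ) (hR : ‖R‖ ≤ c₀)
    (ε k : ℝ) (hk : 0 ≤ k)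
    (hsmall : 4 * k * c₀ ^ 2 * ε < 1)
    (Q : X → Y) (hQ0 : Q 0 = 0)
    (hQ : ∀ x ∈ closedBall (0 : X) (2 * c₀ * ε), ∀ x' ∈ closedBall (0 : X) (2 * c₀ * ε),
      ‖Q x - Q x'‖ ≤ k * ‖x - x'‖ * (‖x‖ + ‖x'‖))
    (y₀ : Y) (hy₀ : ‖y₀‖ ≤ ε) :
    ∃ v : Y, ‖v‖ ≤ 2 * ε ∧ y₀ + L (R v) + Q (R v) = 0 ∧ ‖R v‖ ≤ 2 * c₀ * ε := by
  have hε : 0 ≤ ε := (norm_nonneg y₀).trans hy₀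
  set s := closedBall (0 : Y) (2 * ε)
  have hRs : MapsTo R s (closedBall 0 (2 * c₀ * ε)) := by
    convert R.mapsTo_closedBall_zero hR (2 * ε) using 2; ring
  set T : Y → Y := fun v ↦ -y₀ - Q (R v)
  have hTs : MapsTo T s s := by
    intro v hv
    have hQv := norm_le_mul_sq_of_quadratic hQ0 hQ (hRs hv)
    have hRv := mem_closedBall_zero_iff.1 (hRs hv)
    rw [mem_closedBall_zero_iff]
    calc ‖-y₀ - Q (R v)‖ ≤ ‖y₀‖ + ‖Q (R v)‖ := by simpa using norm_sub_le (-y₀) (Q (R v))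
      _ ≤ ε + k * (2 * c₀ * ε) ^ 2 := by gcongr; exact hQv.trans (by gcongr)
      _ = ε + 4 * k * c₀ ^ 2 * ε * ε := by ring
      _ ≤ ε + 1 * ε := by gcongr
      _ = 2 * ε := by ring
  have hT : LipschitzOnWith (4 * k * c₀ ^ 2 * ε).toNNReal T s := by
    refine LipschitzOnWith.of_dist_le' fun v hv w hw ↦ ?_
    calc dist (T v) (T w) = ‖Q (R w) - Q (R v)‖ := by
          simp only [T, dist_eq_norm]; congr 1; abel
      _ ≤ 2 * k * (2 * c₀ * ε) * c₀ * ‖w - v‖ :=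
          norm_comp_sub_le_of_quadratic hk hQ hR (hRs hw) (hRs hv)
      _ = 4 * k * c₀ ^ 2 * ε * dist v w := by rw [dist_eq_norm']; ring
  obtain ⟨v, hv, hTv⟩ := hT.exists_isFixedPt_of_lt_one (Real.toNNReal_lt_one.2 hsmall)
    isClosed_closedBall.isComplete hTs (nonempty_closedBall.2 (by positivity))
  refine ⟨v, mem_closedBall_zero_iff.1 hv, ?_, mem_closedBall_zero_iff.1 (hRs hv)⟩
  have hLRv : L (R v) = v := DFunLike.congr_fun hLR v
  have hsolve : y₀ + T v + Q (R v) = 0 := by simp only [T]; abel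
  rw [hLRv]
  rwa [hTv] at hsolve

/-- Banach fixed-point scheme solving `y₀ + L x + Q x = 0` with `x = R v` in the range of
the bounded right inverse `R`, for a quadratically small nonlinearity `Q`. -/
theorem stmt_7
    {X Y : Type*} [NormedAddCommGroup X] [NormedSpace ℝ X] [CompleteSpace X]
    [NormedAddCommGroup Y] [NormedSpace ℝ Y] [CompleteSpace Y]
    (L : X →L[ℝ] Y) (R : Y →L[ℝ] X)
    (hLR : L.comp R = ContinuousLinearMap.id ℝ Y)
    (c₀ : ℝ) (hc₀ : 0 < c₀) (hR : ‖R‖ ≤ c₀)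
    (ε k : ℝ) (hε : 0 < ε) (hk : 0 ≤ k)
    (hsmall : 4 * k * c₀ ^ 2 * ε < 1)
    (Q : X → Y) (hQ0 : Q 0 = 0)
    (hQ : ∀ x ∈ closedBall (0 : X) (2 * c₀ * ε), ∀ x' ∈ closedBall (0 : X) (2 * c₀ * ε),
      ‖Q x - Q x'‖ ≤ k * ‖x - x'‖ * (‖x‖ + ‖x'‖))
    (y₀ : Y) (hy₀ : ‖y₀‖ ≤ ε) :
    ∃ v : Y, ‖v‖ ≤ 2 * ε ∧ y₀ + L (R v) + Q (R v) = 0 ∧ ‖R v‖ ≤ 2 * c₀ * ε :=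
  stmt_7_general L R hLR c₀ hR ε k hk hsmall Q hQ0 hQ y₀ hy₀
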